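/- arXiv:1605.01578 — 5 statements merged into one kernel-verified Lean document; each statement's English description precedes it below -/
import Mathlib

section
/- Let G be a finite graph without isolated vertices. Then G is a disjoint union of stars if and only if the set of inclusion-minimal closed neighborhoods of G equals the edge set of G (viewing each edge as a 2-element vertex set). -/
private lemma ncard_one_mem {V : Type*} {s : Set V} {u : V}
    (h1 : s.ncard = 1) (hu : u ∈ s) : s = {u} := by
  obtain ⟨a, ha⟩ := Set.ncard_eq_one.mp h1
  subst ha
  simp_all

/-- A finite graph `G` without isolated vertices is a disjoint union of stars
(equivalently, every edge of `G` has an endpoint of degree 1) if and only if the family of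
inclusion-minimal closed neighborhoods of `G` equals the edge set of `G`, viewing each edge
as a 2-element vertex set. -/
theorem starForest_iff_minimal_closed_neighborhoods_eq_edges {V : Type*} [Fintype V]
    (G : SimpleGraph V) (h : ∀ v : V, ∃ u : V, G.Adj v u) :
    (∀ x y : V, G.Adj x y →
        (G.neighborSet x).ncard = 1 ∨ (G.neighborSet y).ncard = 1) ↔
      {s : Set V | (∃ v : V, s = insert v (G.neighborSet v)) ∧
          ∀ w : V, insert w (G.neighborSet w) ⊆ s → insert w (G.neighborSet w) = s}
        = {s : Set V | ∃ x y : V, G.Adj x y ∧ s = {x, y}} := by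
  constructor
  · intro hdeg
    ext s
    simp only [Set.mem_setOf_eq]
    constructor
    · rintro ⟨⟨v, rfl⟩, hmin⟩
      obtain ⟨u, hvu⟩ := h v
      rcases hdeg v u hvu with h1 | h1
      · have hns : G.neighborSet v = {u} := ncard_one_mem h1 hvu
        exact ⟨v, u, hvu, by rw [hns]⟩
      · have hns : G.neighborSet u = {v} := ncard_one_mem h1 hvu.symm
        have hsub : insert u (G.neighborSet u) ⊆ insert v (G.neighborSet v) := by
          rw [hns]
          intro a ha
          rcases ha with rfl | rfl
          · exact Set.mem_insert_of_mem _ hvu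
          · exact Set.mem_insert _ _
        have := hmin u hsub
        rw [hns] at this
        exact ⟨u, v, hvu.symm, this.symm⟩
    · rintro ⟨x, y, hxy, rfl⟩
      have key : ∀ x y : V, G.Adj x y → G.neighborSet x = {y} →
          (∃ v : V, ({x, y} : Set V) = insert v (G.neighborSet v)) ∧
            ∀ w : V, insert w (G.neighborSet w) ⊆ {x, y} →
              insert w (G.neighborSet w) = {x, y} := by
        intro x y hxy hnx
        refine ⟨⟨x, by rw [hnx]⟩, fun w hw => ?_⟩
        obtain ⟨u, hwu⟩ := h w
        have hwmem : w ∈ ({x, y} : Set V) := hw (Set.mem_insert _ _)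
        have humem : u ∈ ({x, y} : Set V) := hw (Set.mem_insert_of_mem _ hwu)
        have hwne : w ≠ u := G.ne_of_adj hwu
        refine Set.Subset.antisymm hw ?_
        have hux : ({x, y} : Set V) ⊆ {w, u} := by
          rcases hwmem with rfl | rfl <;> rcases humem with rfl | rfl <;>
            first
            | exact absurd rfl hwne
            | (intro a ha; rcases ha with rfl | rfl <;> simp)
        intro a ha
        rcases hux ha with rfl | rfl
        · exact Set.mem_insert _ _
        · exact Set.mem_insert_of_mem _ hwu
      rcases hdeg x y hxy with h1 | h1
      · exact key x y hxy (ncard_one_mem h1 hxy)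
      · have := key y x hxy.symm (ncard_one_mem h1 hxy.symm)
        rw [Set.pair_comm y x] at this
        exact this
  · intro heq x y hxy
    have hmem : ({x, y} : Set V) ∈
        {s : Set V | ∃ x y : V, G.Adj x y ∧ s = {x, y}} := ⟨x, y, hxy, rfl⟩
    rw [← heq] at hmem
    obtain ⟨⟨v, hv⟩, -⟩ := hmem
    have hvmem : v ∈ ({x, y} : Set V) := by rw [hv]; exact Set.mem_insert _ _
    have main : ∀ x y : V, G.Adj x y →
        ({x, y} : Set V) = insert x (G.neighborSet x) →
        (G.neighborSet x).ncard = 1 := by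
      intro x y hxy hv
      have hns : G.neighborSet x = {y} := by
        ext a
        constructor
        · intro ha
          have : a ∈ ({x, y} : Set V) := by rw [hv]; exact Set.mem_insert_of_mem _ ha
          rcases this with rfl | rfl
          · exact absurd ha (G.irrefl)
          · rfl
        · rintro rfl
          exact hxy
      rw [hns, Set.ncard_singleton]
    rcases hvmem with rfl | rfl
    · exact Or.inl (main v y hxy hv)
    · refine Or.inr (main v x hxy.symm ?_)
      rw [Set.pair_comm v x]
      exact hv
end

section
/- Let Ω be a finite set with |Ω| = n and let 2 ≤ r ≤ n−1 with (r,n) not of the form (2, even n). Then there is no graph G with vertex set Ω whose family of minimal dominating sets equals the family of all r-element subsets of Ω. In particular, U_{r,Ω} is a domination hypergraph if and only if r = 1, r = n, or r = 2 and n is even. -/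
def IsDominating {V : Type*} (G : SimpleGraph V) (D : Set V) : Prop :=
  ∀ v ∉ D, ∃ u ∈ D, G.Adj u v

def IsMinDominating {V : Type*} (G : SimpleGraph V) (D : Set V) : Prop :=
  IsDominating G D ∧ ∀ D' ⊂ D, ¬ IsDominating G D'

lemma aux_le_choose : ∀ m k : ℕ, 1 ≤ k → k < m → m ≤ m.choose k := by
  intro m
  induction m with
  | zero => omega
  | succ l ih =>
    intro k hk1 hkm
    rcases Nat.lt_or_ge k l with hkl | hkl
    · obtain ⟨j, rfl⟩ : ∃ j, k = j + 1 := ⟨k - 1, by omega⟩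
      rw [Nat.choose_succ_succ]
      simp only [Nat.succ_eq_add_one]
      have h1 : 1 ≤ l.choose j := Nat.choose_pos (by omega)
      have h2 : l ≤ l.choose (j + 1) := ih (j + 1) hk1 hkl
      omega
    · have : k = l := by omega
      subst this
      rw [Nat.choose_succ_self_right]

lemma aux_lt_choose {m k : ℕ} (h2 : 2 ≤ k) (hk : k + 2 ≤ m) : m < m.choose k := by
  obtain ⟨j, rfl⟩ : ∃ j, k = j + 1 := ⟨k - 1, by omega⟩
  obtain ⟨l, rfl⟩ : ∃ l, m = l + 1 := ⟨m - 1, by omega⟩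
  rw [Nat.choose_succ_succ]
  simp only [Nat.succ_eq_add_one]
  have h1 : l ≤ l.choose j := aux_le_choose l j (by omega) (by omega)
  have h2 : l ≤ l.choose (j + 1) := aux_le_choose l (j + 1) (by omega) (by omega)
  omega

/-- Let `|Ω| = n` and `2 ≤ r ≤ n − 1` with `(r,n)` not of the form `(2, even)`.
Then no graph on `Ω` has as minimal dominating sets exactly all `r`-element subsets;
that is, `U_{r,Ω}` is not a domination hypergraph. -/
theorem uniform_not_domination_hypergraph {V : Type*} [Fintype V] (n r : ℕ)
    (hn : Fintype.card V = n) (hr2 : 2 ≤ r) (hrn : r ≤ n - 1)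
    (hne : ¬ (r = 2 ∧ Even n)) :
    ¬ ∃ G : SimpleGraph V,
        {D : Set V | IsMinDominating G D} = {A : Set V | A.ncard = r} := by
  classical
  rintro ⟨G, hG⟩
  have hn3 : 3 ≤ n := by omega
  have hrn' : r < n := by omega
  have hsetr : ∀ A : Set V, A.ncard = r → IsMinDominating G A := fun A hA =>
    (Set.ext_iff.mp hG A).mpr hA
  have hdom : ∀ A : Set V, A.ncard = r → IsDominating G A := fun A hA => (hsetr A hA).1
  -- no (r-1)-set dominates
  have hnd : ∀ B : Set V, B.ncard = r - 1 → ¬ IsDominating G B := by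
    intro B hB hBd
    have hBne : B ≠ Set.univ := by
      intro h
      rw [h, Set.ncard_univ, Nat.card_eq_fintype_card, hn] at hB
      omega
    obtain ⟨x, hx⟩ : ∃ x, x ∉ B := by
      by_contra h
      push_neg at h
      exact hBne (Set.eq_univ_of_forall h)
    have hA : (insert x B).ncard = r := by
      rw [Set.ncard_insert_of_notMem hx (Set.toFinite B), hB]
      omega
    exact (hsetr _ hA).2 B (Set.ssubset_insert hx) hBd
  -- the non-neighborhood of each vertex
  set M : V → Set V := fun v => {u | u ≠ v ∧ ¬ G.Adj v u} with hMdef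
  have hMcard : ∀ v, (M v).ncard ≤ r - 1 := by
    intro v
    by_contra h
    push_neg at h
    obtain ⟨A, hAs, hAc⟩ := Set.exists_subset_card_eq (show r ≤ (M v).ncard by omega)
    have hvA : v ∉ A := fun hv => (hAs hv).1 rfl
    obtain ⟨u, hu, hadj⟩ := hdom A hAc v hvA
    exact (hAs hu).2 hadj.symm
  -- every (r-1)-set is the non-neighborhood of some vertex
  have hsurj : ∀ B : Set V, B.ncard = r - 1 → ∃ v, M v = B := by
    intro B hB
    have h := hnd B hB
    rw [IsDominating] at h
    push_neg at h
    obtain ⟨v, hvB, hvd⟩ := h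
    have hBM : B ⊆ M v := by
      intro u hu
      refine ⟨fun he => hvB (he ▸ hu), fun hadj => hvd u hu hadj.symm⟩
    have hBeq : B = M v :=
      Set.eq_of_subset_of_ncard_le hBM (by rw [hB]; exact hMcard v) (Set.toFinite _)
    exact ⟨v, hBeq.symm⟩
  -- counting: n.choose (r-1) ≤ n
  have hcount : n.choose (r - 1) ≤ n := by
    set P := (Finset.univ : Finset V).powersetCard (r - 1) with hP
    have hmem : ∀ B : Finset V, B ∈ P → ∃ v, M v = (↑B : Set V) := by
      intro B hB
      apply hsurj
      rw [Set.ncard_coe_finset]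
      exact (Finset.mem_powersetCard.mp hB).2
    choose g hg using hmem
    have hinj : Function.Injective (fun B : {B // B ∈ P} => g B.1 B.2) := by
      intro B1 B2 h
      simp only at h
      have hc : (↑B1.1 : Set V) = ↑B2.1 := by
        rw [← hg B1.1 B1.2, ← hg B2.1 B2.2, h]
      exact Subtype.ext (Finset.coe_injective hc)
    have hle := Fintype.card_le_of_injective _ hinj
    rwa [Fintype.card_coe, hP, Finset.card_powersetCard, Finset.card_univ, hn] at hle
  rcases eq_or_lt_of_le hr2 with hr | hr3
  · -- case r = 2 : get a fixed-point-free involution, so n is even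
    have hr2' : r = 2 := hr.symm
    have hodd : ¬ Even n := fun h => hne ⟨hr2', h⟩
    have hMu : ∀ u : V, ∃ v, M u = {v} := by
      intro u
      obtain ⟨v, hv⟩ := hsurj {u} (by rw [Set.ncard_singleton]; omega)
      have huv : u ∈ M v := by rw [hv]; exact rfl
      have hvu : v ∈ M u := ⟨Ne.symm huv.1, fun hadj => huv.2 hadj.symm⟩
      have hsub : ({v} : Set V) ⊆ M u := Set.singleton_subset_iff.mpr hvu
      have heq : ({v} : Set V) = M u :=
        Set.eq_of_subset_of_ncard_le hsub
          (by rw [Set.ncard_singleton]; have := hMcard u; omega) (Set.toFinite _)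
      exact ⟨v, heq.symm⟩
    choose σ hσ using hMu
    have hmemσ : ∀ u, σ u ∈ M u := fun u => by rw [hσ u]; exact rfl
    have hσne : ∀ u, σ u ≠ u := fun u => (hmemσ u).1
    have hinv : Function.Involutive σ := by
      intro u
      have h1 := hmemσ u
      have h2 : u ∈ M (σ u) := ⟨Ne.symm h1.1, fun hadj => h1.2 hadj.symm⟩
      rw [hσ (σ u)] at h2
      exact h2.symm
    haveI : Fact (Nat.Prime 2) := ⟨Nat.prime_two⟩
    set e : Equiv.Perm V := hinv.toPerm σ with he
    have hpow : e ^ 2 ^ 1 = 1 := by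
      ext x
      simp [he, pow_succ, Equiv.Perm.mul_apply, hinv x]
    have hsupp : e.support = Finset.univ := by
      ext x
      simp only [Equiv.Perm.mem_support, Finset.mem_univ, iff_true, he]
      simpa using hσne x
    have hmod := Equiv.Perm.card_compl_support_modEq hpow
    rw [hsupp, Finset.compl_univ, Finset.card_empty, hn] at hmod
    have : n % 2 = 0 := (Nat.ModEq.symm hmod).trans rfl
    exact hodd (Nat.even_iff.mpr this)
  · -- case r ≥ 3 : too many (r-1)-sets
    have hlt : n < n.choose (r - 1) := aux_lt_choose (by omega) (by omega)
    omega
end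

section
/- Let Ω be a finite set of size 2m. The number of graphs G with vertex set Ω such that the minimal dominating sets of G are exactly all 2-element subsets of Ω is (2m)!/(2^m m!). -/
/-!
The minimal dominating sets of `G` are exactly the pairs iff no vertex dominates on its own and
every pair dominates, i.e. iff every vertex has exactly one non-neighbour: the complement `Gᶜ` is a
perfect matching. Perfect matchings of `V` are the graphs of the fixed-point-free involutions,
which are the permutations of cycle type `2^m`, and that conjugacy class of `Perm V` has
`(2m)! / (2^m m!)` elements.
-/

section

open Equiv Finset

variable {V : Type*} {G : SimpleGraph V}

lemma isDominating_singleton_iff {v : V} : IsDominating G {v} ↔ ∀ w, ¬ Gᶜ.Adj v w := by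
  simp [IsDominating, SimpleGraph.compl_adj, ne_comm]

lemma forall_isDominating_pair_iff :
    (∀ a b : V, a ≠ b → IsDominating G {a, b}) ↔
      ∀ v w w', Gᶜ.Adj v w → Gᶜ.Adj v w' → w = w' := by
  simp only [IsDominating, SimpleGraph.compl_adj]
  constructor
  · rintro h v w w' ⟨hvw, hw⟩ ⟨hvw', hw'⟩
    by_contra hne
    obtain ⟨u, rfl | rfl, hu⟩ := h w w' hne v (by simp [hvw, hvw'])
    exacts [hw hu.symm, hw' hu.symm]
  · intro h a b hab v hv
    simp only [Set.mem_insert_iff, Set.mem_singleton_iff, not_or] at hv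
    by_contra! hnot
    exact hab (h v a b ⟨hv.1, fun h' => hnot a (by simp) h'.symm⟩
      ⟨hv.2, fun h' => hnot b (by simp) h'.symm⟩)

lemma not_isDominating_empty [Nonempty V] : ¬ IsDominating G ∅ := fun h =>
  (h (Classical.arbitrary V) (Set.notMem_empty _)).elim fun _ hu => hu.1

lemma not_isDominating_of_subsingleton [Nonempty V] (h : ∀ v, ¬ IsDominating G {v}) {D : Set V}
    (hD : D.Subsingleton) : ¬ IsDominating G D := by
  obtain rfl | ⟨v, rfl⟩ := hD.eq_empty_or_singleton
  exacts [not_isDominating_empty, h v]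

lemma isMinDominating_pair [Nonempty V] (hsingle : ∀ v, ¬ IsDominating G {v})
    (hpair : ∀ a b : V, a ≠ b → IsDominating G {a, b}) {a b : V} (hab : a ≠ b) :
    IsMinDominating G {a, b} := by
  refine ⟨hpair a b hab, fun D hD => ?_⟩
  have : Finite D := (Set.toFinite {a, b}).subset hD.subset
  refine not_isDominating_of_subsingleton hsingle (Set.ncard_le_one_iff_subsingleton.1 ?_)
  have := Set.ncard_lt_ncard hD
  rw [Set.ncard_pair hab] at this
  omega

lemma minDominating_eq_pairs_iff [Nonempty V] :
    {D | IsMinDominating G D} = {A : Set V | A.ncard = 2} ↔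
      (∀ v, ¬ IsDominating G {v}) ∧ ∀ a b : V, a ≠ b → IsDominating G {a, b} := by
  constructor
  · intro h
    refine ⟨fun v hv => ?_, fun a b hab => (h.superset (Set.ncard_pair hab)).1⟩
    have : IsMinDominating G {v} := ⟨hv, fun D hD => by
      rw [Set.ssubset_singleton_iff.1 hD]; exact not_isDominating_empty⟩
    simpa using h.subset this
  · rintro ⟨hsingle, hpair⟩
    ext D
    refine ⟨fun hD => ?_, fun hD => ?_⟩
    · obtain ⟨a, ha, b, hb, hab⟩ := Set.not_subsingleton_iff.1
        fun hs => not_isDominating_of_subsingleton hsingle hs hD.1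
      have hsub : {a, b} ⊆ D := Set.insert_subset ha (Set.singleton_subset_iff.2 hb)
      obtain rfl : D = {a, b} := by
        by_contra hne
        exact hD.2 _ (hsub.ssubset_of_ne (Ne.symm hne)) (hpair a b hab)
      exact Set.ncard_pair hab
    · obtain ⟨a, b, hab, rfl⟩ := Set.ncard_eq_two.1 hD
      exact isMinDominating_pair hsingle hpair hab

lemma minDominating_eq_pairs_iff_existsUnique_compl_adj [Nonempty V] :
    {D | IsMinDominating G D} = {A : Set V | A.ncard = 2} ↔ ∀ v, ∃! w, Gᶜ.Adj v w := by
  simp only [minDominating_eq_pairs_iff, isDominating_singleton_iff, forall_isDominating_pair_iff,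
    not_forall, not_not]
  exact ⟨fun ⟨hex, huniq⟩ v => existsUnique_of_exists_of_unique (hex v) (huniq v),
    fun h => ⟨fun v => (h v).exists, fun v _ _ => (h v).unique⟩⟩

variable (V) in
def fixedPointFreeInvolutions : Set (Perm V) := {σ | σ ^ 2 = 1 ∧ ∀ x, σ x ≠ x}

lemma cycleType_eq_replicate_two_iff [Fintype V] [DecidableEq V] {m : ℕ}
    (hcard : Fintype.card V = 2 * m) {σ : Perm V} :
    σ.cycleType = Multiset.replicate m 2 ↔ σ ∈ fixedPointFreeInvolutions V := by
  have : Fact (Nat.Prime 2) := ⟨Nat.prime_two⟩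
  have hsupp : σ.support = univ ↔ #σ.support = 2 * m := by
    rw [← hcard, card_eq_iff_eq_univ]
  simp only [fixedPointFreeInvolutions, Set.mem_ofPred_eq, ← Perm.mem_support,
    ← eq_univ_iff_forall, hsupp, ← Perm.sum_cycleType]
  constructor
  · intro h
    refine ⟨Perm.pow_prime_eq_one_iff.2 fun c hc => ?_, ?_⟩
    · exact Multiset.eq_of_mem_replicate (h ▸ hc)
    · simp [h, mul_comm]
  · rintro ⟨hsq, hsum⟩
    rw [Perm.cycleType_of_pow_prime_eq_one hsq] at hsum ⊢
    simp only [Multiset.sum_replicate, smul_eq_mul] at hsum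
    congr 1
    omega

lemma ncard_fixedPointFreeInvolutions [Fintype V] {m : ℕ} (hcard : Fintype.card V = 2 * m) :
    (fixedPointFreeInvolutions V).ncard = (2 * m).factorial / (2 ^ m * m.factorial) := by
  classical
  have : fixedPointFreeInvolutions V =
      ↑({σ | σ.cycleType = Multiset.replicate m 2} : Finset (Perm V)) := by
    ext σ
    simp [cycleType_eq_replicate_two_iff hcard]
  rw [this, Set.ncard_coe_finset, Perm.card_of_cycleType, if_pos ⟨by simp [hcard, mul_comm],
    fun _ ha => (Multiset.eq_of_mem_replicate ha).ge⟩]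
  rcases eq_or_ne m 0 with rfl | hm
  · simp [hcard]
  · simp [hcard, mul_comm m 2, Multiset.toFinset_replicate, hm, Multiset.prod_replicate]

/-- Defined through `fromRel` so that it makes sense for every permutation; for a fixed-point-free
involution it is the perfect matching `{x, σ x}`. -/
def permGraph (σ : Perm V) : SimpleGraph V := SimpleGraph.fromRel fun u v => σ u = v

lemma permGraph_adj_iff {σ : Perm V} (hσ : σ ∈ fixedPointFreeInvolutions V) {u v : V} :
    (permGraph σ).Adj u v ↔ σ u = v := by
  have hinv : ∀ x, σ (σ x) = x := fun x => by rw [← Perm.mul_apply, ← sq, hσ.1, Perm.one_apply]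
  refine ⟨fun ⟨_, h⟩ => h.elim id fun h => by rw [← h, hinv], fun h => ⟨?_, Or.inl h⟩⟩
  rintro rfl
  exact hσ.2 u h

lemma injOn_permGraph : (fixedPointFreeInvolutions V).InjOn permGraph := by
  intro σ hσ τ hτ h
  ext v
  have : (permGraph τ).Adj v (σ v) := h ▸ (permGraph_adj_iff hσ).2 rfl
  exact ((permGraph_adj_iff hτ).1 this).symm

lemma image_permGraph_fixedPointFreeInvolutions :
    permGraph '' fixedPointFreeInvolutions V = {H : SimpleGraph V | ∀ v, ∃! w, H.Adj v w} := by
  ext H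
  constructor
  · rintro ⟨σ, hσ, rfl⟩ v
    simp only [permGraph_adj_iff hσ, existsUnique_eq']
  · intro hH
    choose f hf hfu using hH
    have hinv : Function.Involutive f := fun v => (hfu (f v) v (hf v).symm).symm
    have hσ : hinv.toPerm f ∈ fixedPointFreeInvolutions V :=
      ⟨Perm.ext fun v => by simp [sq, hinv v], fun v => (hf v).ne.symm⟩
    refine ⟨_, hσ, ?_⟩
    ext u v
    rw [permGraph_adj_iff hσ, Function.Involutive.coe_toPerm]
    exact ⟨fun h => h ▸ hf u, fun h => (hfu u v h).symm⟩

end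

/-- If `|Ω| = 2m`, the number of graphs on `Ω` whose minimal dominating sets are exactly
all 2-element subsets of `Ω` is `(2m)!/(2^m·m!)`. -/
theorem card_graphs_minDominating_eq_pairs {V : Type*} [Fintype V]
    (m : ℕ) (hm : 1 ≤ m) (hcard : Fintype.card V = 2 * m) :
    {G : SimpleGraph V |
        {D : Set V | IsMinDominating G D} = {A : Set V | A.ncard = 2}}.ncard
      = (2 * m).factorial / (2 ^ m * m.factorial) := by
  have : Nonempty V := Fintype.card_pos_iff.mp (by omega)
  have hgraphs : {G : SimpleGraph V |
      {D : Set V | IsMinDominating G D} = {A : Set V | A.ncard = 2}} =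
        compl ⁻¹' (permGraph '' fixedPointFreeInvolutions V) := by
    ext G
    simp [image_permGraph_fixedPointFreeInvolutions,
      minDominating_eq_pairs_iff_existsUnique_compl_adj]
  rw [hgraphs, Set.ncard_preimage_of_injective_subset_range compl_injective
      (by simp [compl_surjective.range_eq]),
    injOn_permGraph.ncard_image, ncard_fixedPointFreeInvolutions hcard]
end

section
/- If G is a graph with vertex set V(G) = Ω such that the family of all r-element subsets of Ω is a domination completion realized by G (i.e., D(G) = H with H a hypergraph on Ω), then the transversal hypergraph tr(D(G)) equals the family of minimal closed neighborhoods of G; in particular |tr(D(G))| ≤ |Ω|. -/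
/-- The transversal of a family `H` of subsets of `V`: inclusion-minimal sets meeting
every member of `H`. -/
def transversal {V : Type*} (H : Set (Set V)) : Set (Set V) :=
  {X | (∀ A ∈ H, (X ∩ A).Nonempty) ∧ ∀ Y ⊂ X, ¬ ∀ A ∈ H, (Y ∩ A).Nonempty}

/-!
Every closed neighbourhood `N[v]` meets every dominating set. Conversely, if `Y` contains no
`N[v]`, then every vertex of `Y` has a neighbour outside `Y`, so `Yᶜ` is dominating and contains
a minimal dominating set missing `Y`. Hence the sets meeting all minimal dominating sets are
exactly the supersets of closed neighbourhoods, and the minimal ones are the minimal closed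
neighbourhoods.
-/

theorem transversal_eq_minimal_range {α ι : Type*} {H : Set (Set α)} (N : ι → Set α)
    (hN : ∀ i, ∀ A ∈ H, (N i ∩ A).Nonempty)
    (hblock : ∀ X : Set α, (∀ A ∈ H, (X ∩ A).Nonempty) → ∃ i, N i ⊆ X) :
    transversal H = {s | (∃ i, s = N i) ∧ ∀ j, N j ⊆ s → N j = s} := by
  ext X
  constructor
  · rintro ⟨hX, hXmin⟩
    have hsub_eq : ∀ j, N j ⊆ X → N j = X := fun j hj =>
      by_contra fun hne => hXmin _ (hj.ssubset_of_ne hne) (hN j)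
    obtain ⟨i, hi⟩ := hblock X hX
    exact ⟨⟨i, (hsub_eq i hi).symm⟩, hsub_eq⟩
  · rintro ⟨⟨i, rfl⟩, hmin⟩
    refine ⟨hN i, fun Y hYX hY => ?_⟩
    obtain ⟨j, hj⟩ := hblock Y hY
    exact hYX.not_subset (hmin j (hj.trans hYX.subset) ▸ hj)

namespace IsDominating

variable {V : Type*} {G : SimpleGraph V} {D : Set V}

theorem inter_closedNbhd_nonempty (hD : IsDominating G D) (v : V) :
    (insert v (G.neighborSet v) ∩ D).Nonempty := by
  by_cases hv : v ∈ D
  · exact ⟨v, Set.mem_insert _ _, hv⟩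
  · obtain ⟨u, huD, hadj⟩ := hD v hv
    exact ⟨u, Set.mem_insert_of_mem _ hadj.symm, huD⟩

theorem exists_isMinDominating_subset [Finite V] (hD : IsDominating G D) :
    ∃ D' ⊆ D, IsMinDominating G D' := by
  obtain ⟨D', hD'D, hmin⟩ := exists_minimal_le_of_wellFoundedLT (IsDominating G) D hD
  exact ⟨D', hD'D, hmin.prop, fun D'' hlt hdom => hlt.not_subset (hmin.le_of_le hdom hlt.le)⟩

end IsDominating

theorem isDominating_compl_of_forall_not_closedNbhd_subset {V : Type*} {G : SimpleGraph V}
    {Y : Set V} (h : ∀ v, ¬ insert v (G.neighborSet v) ⊆ Y) : IsDominating G Yᶜ := by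
  intro v hv
  rw [Set.notMem_compl_iff] at hv
  obtain ⟨u, hu, huY⟩ := Set.not_subset.mp (h v)
  rcases hu with rfl | hadj
  · exact absurd hv huY
  · exact ⟨u, huY, hadj.symm⟩

theorem exists_closedNbhd_subset_of_forall_isMinDominating {V : Type*} [Finite V]
    {G : SimpleGraph V} {Y : Set V} (hY : ∀ D, IsMinDominating G D → (Y ∩ D).Nonempty) :
    ∃ v, insert v (G.neighborSet v) ⊆ Y := by
  by_contra! h
  obtain ⟨D, hDY, hD⟩ :=
    (isDominating_compl_of_forall_not_closedNbhd_subset h).exists_isMinDominating_subset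
  obtain ⟨x, hxY, hxD⟩ := hY D hD
  exact hDY hxD hxY

/-- For any graph `G`, the transversal of the family of minimal dominating sets equals the
family of inclusion-minimal closed neighborhoods of `G`; in particular its cardinality is
at most the number of vertices. -/
theorem transversal_minDominating_eq_minimal_neighborhoods {V : Type*} [Fintype V]
    (G : SimpleGraph V) :
    transversal {D : Set V | IsMinDominating G D}
        = {s : Set V | (∃ v : V, s = insert v (G.neighborSet v)) ∧
            ∀ w : V, insert w (G.neighborSet w) ⊆ s → insert w (G.neighborSet w) = s} ∧
      (transversal {D : Set V | IsMinDominating G D}).ncard ≤ Fintype.card V := by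
  have htr := transversal_eq_minimal_range (H := {D | IsMinDominating G D})
    (fun v => insert v (G.neighborSet v))
    (fun v _ hD => hD.1.inter_closedNbhd_nonempty v)
    (fun _ hX => exists_closedNbhd_subset_of_forall_isMinDominating hX)
  refine ⟨htr, ?_⟩
  have hrange : transversal {D | IsMinDominating G D}
      ⊆ Set.range fun v => insert v (G.neighborSet v) := by
    rw [htr]
    rintro _ ⟨⟨v, rfl⟩, -⟩
    exact ⟨v, rfl⟩
  calc (transversal {D | IsMinDominating G D}).ncard
      ≤ (Set.range fun v => insert v (G.neighborSet v)).ncard :=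
        Set.ncard_le_ncard hrange (Set.toFinite _)
    _ ≤ Fintype.card V := by
        rw [← Nat.card_coe_set_eq, ← Nat.card_eq_fintype_card]
        exact Finite.card_range_le _
end

section
/- Let Ω = {ω₁,…,ω_n} with n ≥ 3, and for 1 ≤ i ≤ n−1 let H_i = {{ω_i}, Ω∖{ω_i}} (the minimal dominating sets of the star with center ω_i and all other vertices as leaves). Then the family of inclusion-minimal sets of the form A₁ ∪ ⋯ ∪ A_{n−1} with A_i ∈ H_i equals U_{n−1,Ω}, the family of all (n−1)-element subsets of Ω. -/
/-!
Every union of choices contains a co-singleton `Ω ∖ {v}`: either some `A i` is the co-singleton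
`Ω ∖ {ω_i}`, or all `A i` are singletons and the union is `Ω ∖ {ω_n}`. Conversely every
co-singleton is such a union (choose `Ω ∖ {ω_i}` once and singletons elsewhere, or singletons
throughout for `ω_n`). Since co-singletons are pairwise incomparable, the minimal unions are exactly
the co-singletons, i.e. the `(n-1)`-element subsets.
-/

open Set Function

section

variable {ι V : Type*}

theorem Set.ncard_eq_natCard_sub_one_iff [Finite V] [Nonempty V] {s : Set V} :
    s.ncard = Nat.card V - 1 ↔ ∃ v, s = {v}ᶜ := by
  constructor
  · intro hs
    have hcompl : sᶜ.ncard = 1 := by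
      have := ncard_add_ncard_compl s
      have := Nat.card_pos (α := V)
      omega
    obtain ⟨v, hv⟩ := ncard_eq_one.mp hcompl
    exact ⟨v, by rw [← hv, compl_compl]⟩
  · rintro ⟨v, rfl⟩
    rw [ncard_compl, ncard_singleton]

def inclusionMinimal (U : Set (Set V)) : Set (Set V) :=
  {s ∈ U | ∀ t ∈ U, t ⊆ s → t = s}

theorem inclusionMinimal_eq_range_compl_singleton {U : Set (Set V)}
    (hmem : ∀ v, {v}ᶜ ∈ U) (hsub : ∀ s ∈ U, ∃ v, {v}ᶜ ⊆ s) :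
    inclusionMinimal U = range fun v : V => ({v}ᶜ : Set V) := by
  ext s
  constructor
  · rintro ⟨hs, hmin⟩
    obtain ⟨v, hv⟩ := hsub s hs
    exact ⟨v, hmin _ (hmem v) hv⟩
  · rintro ⟨v, rfl⟩
    refine ⟨hmem v, fun t ht htv => ?_⟩
    obtain ⟨u, hut⟩ := hsub t ht
    have hvu : v = u := by simpa using hut.trans htv
    exact htv.antisymm (hvu ▸ hut)

/-- `inclusionMinimal (unionsOfChoices H)` is the paper's `H₁ ⊓ ⋯ ⊓ H_k`. -/
def unionsOfChoices (H : ι → Set (Set V)) : Set (Set V) :=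
  {s | ∃ A : ι → Set V, (∀ i, A i ∈ H i) ∧ s = ⋃ i, A i}

variable (c : ι → V)

theorem range_mem_unionsOfChoices_star :
    range c ∈ unionsOfChoices fun i => {{c i}, {c i}ᶜ} :=
  ⟨fun i => {c i}, fun _ => mem_insert _ _, (iUnion_singleton_eq_range c).symm⟩

theorem compl_singleton_mem_unionsOfChoices_star (hc : Injective c) (i : ι) :
    {c i}ᶜ ∈ unionsOfChoices fun i => {{c i}, {c i}ᶜ} := by
  classical
  refine ⟨update (fun j => {c j}) i {c i}ᶜ, fun j => ?_, ?_⟩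
  · rcases eq_or_ne j i with rfl | hji
    · simp
    · simp [hji]
  · refine (subset_iUnion_of_subset i (by simp)).antisymm (iUnion_subset fun j => ?_)
    rcases eq_or_ne j i with rfl | hji
    · simp
    · simpa [hji] using hc.ne hji.symm

theorem exists_compl_singleton_subset_of_mem_unionsOfChoices_star {last : V}
    (hlast : {last}ᶜ ⊆ range c) {s : Set V} (hs : s ∈ unionsOfChoices fun i => {{c i}, {c i}ᶜ}) :
    ∃ v, {v}ᶜ ⊆ s := by
  obtain ⟨A, hA, rfl⟩ := hs
  by_cases hcompl : ∃ i, A i = {c i}ᶜ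
  · obtain ⟨i, hi⟩ := hcompl
    exact ⟨c i, hi ▸ subset_iUnion A i⟩
  · push Not at hcompl
    refine ⟨last, fun x hx => ?_⟩
    obtain ⟨i, rfl⟩ := hlast hx
    have hi : A i = {c i} := (hA i).resolve_right (hcompl i)
    exact mem_iUnion_of_mem i (hi ▸ rfl)

theorem inclusionMinimal_unionsOfChoices_star (hc : Injective c) {last : V}
    (hlast : range c = {last}ᶜ) :
    inclusionMinimal (unionsOfChoices fun i => {{c i}, {c i}ᶜ}) =
      range fun v : V => ({v}ᶜ : Set V) := by
  refine inclusionMinimal_eq_range_compl_singleton (fun v => ?_)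
    (fun s => exists_compl_singleton_subset_of_mem_unionsOfChoices_star c hlast.ge)
  by_cases hv : v ∈ range c
  · obtain ⟨i, rfl⟩ := hv
    exact compl_singleton_mem_unionsOfChoices_star c hc i
  · rw [hlast, mem_compl_iff, not_not, mem_singleton_iff] at hv
    exact hv ▸ hlast ▸ range_mem_unionsOfChoices_star c

theorem Function.Bijective.range_comp_castLE_sub_one {n : ℕ} {w : Fin n → V} (hw : Bijective w)
    (hn : 0 < n) :
    range (fun i : Fin (n - 1) => w (Fin.castLE (Nat.sub_le n 1) i)) = {w ⟨n - 1, by omega⟩}ᶜ := by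
  have hlow : {i : Fin n | (i : ℕ) < n - 1} = {⟨n - 1, by omega⟩}ᶜ := by
    ext i
    simp only [mem_ofPred_eq, mem_compl_iff, mem_singleton_iff, Fin.ext_iff]
    omega
  rw [range_comp' w, Fin.range_castLE, hlow, image_compl_eq hw, image_singleton]

end

/-- Let `Ω = {ω₁,…,ω_n}`, `n ≥ 3`, and for `1 ≤ i ≤ n−1` let
`H i = {{ω_i}, Ω∖{ω_i}}`. The inclusion-minimal sets of the form `A₁ ∪ ⋯ ∪ A_{n−1}` with
`A_i ∈ H i` are exactly the `(n−1)`-element subsets of `Ω`. -/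
theorem sqcap_stars_eq_uniform {V : Type*} [Fintype V] (n : ℕ) (hn : 3 ≤ n)
    (hcard : Fintype.card V = n) (w : Fin n → V) (hw : Function.Bijective w)
    (H : Fin (n - 1) → Set (Set V))
    (hH : ∀ i : Fin (n - 1), H i =
        {({w (Fin.castLE (Nat.sub_le n 1) i)} : Set V),
          (Set.univ \ {w (Fin.castLE (Nat.sub_le n 1) i)})})
    (U : Set (Set V))
    (hU : U = {s : Set V | ∃ A : Fin (n - 1) → Set V,
        (∀ i, A i ∈ H i) ∧ s = ⋃ i, A i}) :
    {s ∈ U | ∀ t ∈ U, t ⊆ s → t = s} = {A : Set V | A.ncard = n - 1} := by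
  set c : Fin (n - 1) → V := fun i => w (Fin.castLE (Nat.sub_le n 1) i)
  have hc : Injective c := hw.injective.comp (Fin.castLE_injective _)
  have hH' : H = fun i => {{c i}, {c i}ᶜ} := funext fun i => by rw [hH, compl_eq_univ_sdiff]
  have : Nonempty V := ⟨w ⟨0, by omega⟩⟩
  have huniform : {A : Set V | A.ncard = n - 1} = range fun v : V => ({v}ᶜ : Set V) := by
    ext s
    rw [mem_ofPred_eq, ← hcard, ← Nat.card_eq_fintype_card, ncard_eq_natCard_sub_one_iff]
    simp only [mem_range, eq_comm]
  rw [huniform, ← inclusionMinimal_unionsOfChoices_star c hc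
    (hw.range_comp_castLE_sub_one (by omega)), hU, hH']
  rfl
end
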